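/- Let S and A be finite sets, H a positive integer, d a positive integer. Let ρ : S → ℝ be nonnegative with Σ_{s∈S} ρ(s) = 1, let P : S × S × A → ℝ be nonnegative with Σ_{s'∈S} P(s',s,a) = 1 for all s,a, and let π : ℝ^d × S × A → ℝ be differentiable in θ, strictly positive, with Σ_{a∈A} π(θ,s,a) = 1 for all θ,s. For a trajectory τ = (s_0,a_0,…,s_{H-1},a_{H-1},s_H) set f(θ,τ) = ρ(s_0)·Π_{i=0}^{H-1} π(θ,s_i,a_i)·P(s_{i+1},s_i,a_i). Let R : Finset (S × ℕ) → ℝ be a set function, let τ_{0:j} = {(s_0,0),…,(s_j,j)}, and define the trajectory reward R(τ) = R(τ_{0:H}). Define J(θ) = Σ_τ f(θ,τ)·R(τ). Then for every θ, ∇J(θ) = Σ_τ f(θ,τ) · Σ_{i=0}^{H-1} ∇_θ log π(θ,s_i,a_i) · ( Σ_{j=i}^{H-1} [R(τ_{0:j+1}) − R(τ_{0:j})] + R({(s_0,0)}) ). -/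

import Mathlib

/-- The probability of a trajectory `τ = (s, a)` over horizon `H` under policy
parameters `θ`: `f(θ,τ) = ρ(s₀) · ∏ᵢ π(θ,sᵢ,aᵢ) · ∏ᵢ P(sᵢ₊₁,sᵢ,aᵢ)`. -/
noncomputable def trajProb {S A : Type*} {d H : ℕ}
    (ρ : S → ℝ) (P : S → S → A → ℝ)
    (π : EuclideanSpace ℝ (Fin d) → S → A → ℝ)
    (θ : EuclideanSpace ℝ (Fin d))
    (τ : (Fin (H + 1) → S) × (Fin H → A)) : ℝ :=
  ρ (τ.1 0) * (∏ i : Fin H, π θ (τ.1 i.castSucc) (τ.2 i))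
    * ∏ i : Fin H, P (τ.1 i.succ) (τ.1 i.castSucc) (τ.2 i)

open Fin.NatCast in
/-- The partial trajectory `τ_{0:j} = {(s₀,0),…,(s_j,j)}` of time-augmented states
(for `j ≤ H`). -/
def trajSet {S : Type*} [DecidableEq S] {H : ℕ}
    (s : Fin (H + 1) → S) (j : ℕ) : Finset (S × ℕ) :=
  (Finset.range (j + 1)).image (fun k => (s (k : ℕ), k))

/-!
Likelihood ratio: `∇ f(θ,τ) = f(θ,τ) • ∑ᵢ ∇ log π(θ,sᵢ,aᵢ)`, so `∇J(θ)` is the expectation of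
`R(τ_{0:H}) • ∑ᵢ ∇ log π(θ,sᵢ,aᵢ)`. The marginal gains telescope, so the weight of the `i`-th
score on the right-hand side is `R(τ_{0:H}) + (R(τ_{0:0}) - R(τ_{0:i}))`, and the extra term
depends only on the history up to `sᵢ`. Such a baseline contributes nothing: summing out the
future (transition and policy probabilities sum to one) and then `aᵢ` leaves
`∑ₐ π(θ,sᵢ,a) • ∇ log π(θ,sᵢ,a) = ∇ ∑ₐ π(θ,sᵢ,a) = 0`.
-/

open Finset
open scoped Gradient

section Gradient

variable {F : Type*} [NormedAddCommGroup F] [InnerProductSpace ℝ F] [CompleteSpace F]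

theorem gradient_log {f : F → ℝ} {x : F} (hf : DifferentiableAt ℝ f x) (hx : f x ≠ 0) :
    ∇ (fun y => Real.log (f y)) x = (f x)⁻¹ • ∇ f x := by
  rw [gradient, (hf.hasFDerivAt.log hx).fderiv, map_smul, gradient]

theorem HasGradientAt.fun_sum {ι : Type*} {u : Finset ι} {f : ι → F → ℝ} {f' : ι → F} {x : F}
    (hf : ∀ i ∈ u, HasGradientAt (f i) (f' i) x) :
    HasGradientAt (fun y => ∑ i ∈ u, f i y) (∑ i ∈ u, f' i) x := by
  rw [hasGradientAt_iff_hasFDerivAt, map_sum]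
  exact HasFDerivAt.fun_sum fun i hi => (hf i hi).hasFDerivAt

theorem HasGradientAt.mul_const {f : F → ℝ} {f' x : F} (hf : HasGradientAt f f' x) (c : ℝ) :
    HasGradientAt (fun y => f y * c) (c • f') x := by
  rw [hasGradientAt_iff_hasFDerivAt, map_smul]
  exact hf.hasFDerivAt.mul_const c

theorem HasGradientAt.const_mul {f : F → ℝ} {f' x : F} (hf : HasGradientAt f f' x) (c : ℝ) :
    HasGradientAt (fun y => c * f y) (c • f') x := by
  rw [hasGradientAt_iff_hasFDerivAt, map_smul]
  exact hf.hasFDerivAt.const_mul c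

theorem sum_smul_gradient_log_eq_zero {ι : Type*} [Fintype ι] {p : ι → F → ℝ} {x : F}
    (hp : ∀ i, DifferentiableAt ℝ (p i) x) (hx : ∀ i, p i x ≠ 0) (hsum : ∀ y, ∑ i, p i y = 1) :
    ∑ i, p i x • ∇ (fun y => Real.log (p i y)) x = 0 := by
  have hgrad : HasGradientAt (fun y => ∑ i, p i y) (∑ i, ∇ (p i) x) x :=
    HasGradientAt.fun_sum fun i _ => (hp i).hasGradientAt
  simp only [hsum] at hgrad
  simp only [gradient_log (hp _) (hx _), smul_smul, mul_inv_cancel₀ (hx _), one_smul]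
  rw [← hgrad.gradient, gradient_fun_const]

theorem hasGradientAt_prod {ι : Type*} [Fintype ι] {g : ι → F → ℝ} {x : F}
    (hg : ∀ i, DifferentiableAt ℝ (g i) x) (hx : ∀ i, g i x ≠ 0) :
    HasGradientAt (fun y => ∏ i, g i y)
      ((∏ i, g i x) • ∑ i, ∇ (fun y => Real.log (g i y)) x) x := by
  classical
  have hprod := HasFDerivAt.finsetProd (u := univ) fun i _ => (hg i).hasFDerivAt
  rw [hasGradientAt_iff_hasFDerivAt]
  refine hprod.congr_fderiv ?_
  simp only [smul_sum, map_sum, map_smul, gradient_log (hg _) (hx _), toDual_gradient, smul_smul]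
  refine sum_congr rfl fun i hi => ?_
  rw [← mul_prod_erase univ (fun j => g j x) hi, mul_comm, inv_mul_cancel_left₀ (hx i)]

end Gradient

section Trajectories

variable {S A : Type*}

def trajRestrict {m n : ℕ} (h : m ≤ n) (τ : (Fin (n + 1) → S) × (Fin n → A)) :
    (Fin (m + 1) → S) × (Fin m → A) :=
  (τ.1 ∘ Fin.castLE (Nat.succ_le_succ h), τ.2 ∘ Fin.castLE h)

theorem trajRestrict_trajRestrict {k m n : ℕ} (hkm : k ≤ m) (hmn : m ≤ n)
    (τ : (Fin (n + 1) → S) × (Fin n → A)) :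
    trajRestrict hkm (trajRestrict hmn τ) = trajRestrict (hkm.trans hmn) τ :=
  rfl

@[simp]
theorem trajRestrict_snoc {n : ℕ} (τ : (Fin (n + 1) → S) × (Fin n → A)) (a : A) (s : S) :
    trajRestrict n.le_succ (Fin.snoc τ.1 s, Fin.snoc τ.2 a) = τ := by
  ext i
  · exact Fin.snoc_castSucc (α := fun _ => S) ..
  · exact Fin.snoc_castSucc (α := fun _ => A) ..

variable {d : ℕ} {ρ : S → ℝ} {P : S → S → A → ℝ} {π : EuclideanSpace ℝ (Fin d) → S → A → ℝ}
  {θ : EuclideanSpace ℝ (Fin d)}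

theorem trajProb_snoc {n : ℕ} (τ : (Fin (n + 1) → S) × (Fin n → A)) (a : A) (s : S) :
    trajProb ρ P π θ (Fin.snoc τ.1 s, Fin.snoc τ.2 a) =
      trajProb ρ P π θ τ * (π θ (τ.1 (Fin.last n)) a * P s (τ.1 (Fin.last n)) a) := by
  simp only [trajProb, Fin.prod_univ_castSucc, Fin.snoc_castSucc, Fin.snoc_last, Fin.succ_last,
    ← Fin.castSucc_succ]
  have hs₀ : Fin.snoc (α := fun _ => S) τ.1 s 0 = τ.1 0 := by simp
  rw [hs₀]
  ring

theorem hasGradientAt_trajProb {n : ℕ}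
    (hdiff : ∀ s a, DifferentiableAt ℝ (fun θ => π θ s a) θ) (hπ : ∀ s a, π θ s a ≠ 0)
    (τ : (Fin (n + 1) → S) × (Fin n → A)) :
    HasGradientAt (fun θ => trajProb ρ P π θ τ)
      (trajProb ρ P π θ τ • ∑ i, ∇ (fun θ' => Real.log (π θ' (τ.1 i.castSucc) (τ.2 i))) θ) θ := by
  have hprod := hasGradientAt_prod (g := fun i θ => π θ (τ.1 i.castSucc) (τ.2 i))
    (fun _ => hdiff _ _) (fun _ => hπ _ _)
  have h : HasGradientAt (fun θ => trajProb ρ P π θ τ) _ θ :=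
    (hprod.const_mul (ρ (τ.1 0))).mul_const (∏ i : Fin n, P (τ.1 i.succ) (τ.1 i.castSucc) (τ.2 i))
  convert h using 1
  rw [smul_smul, smul_smul, trajProb, mul_comm, mul_assoc]

variable [Fintype S] [Fintype A]

theorem sum_traj_succ {E : Type*} [AddCommMonoid E] {n : ℕ}
    (F : (Fin (n + 2) → S) × (Fin (n + 1) → A) → E) :
    ∑ τ, F τ =
      ∑ τ : (Fin (n + 1) → S) × (Fin n → A), ∑ a, ∑ s, F (Fin.snoc τ.1 s, Fin.snoc τ.2 a) := by
  rw [← (((Equiv.prodComm _ _).trans (Fin.snocEquiv fun _ => S)).prodCongr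
    ((Equiv.prodComm _ _).trans (Fin.snocEquiv fun _ => A))).sum_comp]
  simp only [Fintype.sum_prod_type]
  refine sum_congr rfl fun s _ => ?_
  rw [sum_comm]
  refine sum_congr rfl fun a _ => ?_
  rw [sum_comm]
  rfl

theorem sum_trajProb_succ_smul {E : Type*} [AddCommGroup E] [Module ℝ E]
    (hPsum : ∀ s a, ∑ s', P s' s a = 1) {n : ℕ}
    (G : (Fin (n + 1) → S) × (Fin n → A) → A → E) :
    ∑ τ : (Fin (n + 2) → S) × (Fin (n + 1) → A),
        trajProb ρ P π θ τ • G (trajRestrict n.le_succ τ) (τ.2 (Fin.last n)) =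
      ∑ τ, trajProb ρ P π θ τ • ∑ a, π θ (τ.1 (Fin.last n)) a • G τ a := by
  rw [sum_traj_succ]
  refine sum_congr rfl fun τ _ => ?_
  simp only [trajProb_snoc, trajRestrict_snoc, Fin.snoc_last, smul_sum]
  refine sum_congr rfl fun a _ => ?_
  rw [← sum_smul, ← mul_sum, ← mul_sum, hPsum, mul_one, smul_smul]

theorem sum_trajProb_smul_trajRestrict {E : Type*} [AddCommGroup E] [Module ℝ E]
    (hPsum : ∀ s a, ∑ s', P s' s a = 1) (hsum : ∀ s, ∑ a, π θ s a = 1) {m n : ℕ} (h : m ≤ n)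
    (g : (Fin (m + 1) → S) × (Fin m → A) → E) :
    ∑ τ : (Fin (n + 1) → S) × (Fin n → A), trajProb ρ P π θ τ • g (trajRestrict h τ) =
      ∑ τ, trajProb ρ P π θ τ • g τ := by
  induction n, h using Nat.le_induction with
  | base => rfl
  | succ n hmn ih =>
    simp_rw [← trajRestrict_trajRestrict hmn n.le_succ]
    rw [sum_trajProb_succ_smul hPsum fun τ _ => g (trajRestrict hmn τ)]
    simp only [← sum_smul, hsum, one_smul, ih]

theorem sum_trajProb_baseline_smul_eq_zero {E : Type*} [AddCommGroup E] [Module ℝ E]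
    (hPsum : ∀ s a, ∑ s', P s' s a = 1) (hsum : ∀ s, ∑ a, π θ s a = 1)
    (L : S → A → E) (hL : ∀ s, ∑ a, π θ s a • L s a = 0) {n : ℕ} (i : Fin n)
    (b : (Fin (i + 1) → S) × (Fin i → A) → ℝ) :
    ∑ τ : (Fin (n + 1) → S) × (Fin n → A),
      trajProb ρ P π θ τ • (b (trajRestrict i.is_le' τ) • L (τ.1 i.castSucc) (τ.2 i)) = 0 := by
  let G : (Fin (i + 1) → S) × (Fin i → A) → A → E := fun τ a => b τ • L (τ.1 (Fin.last i)) a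
  let g : (Fin (i + 2) → S) × (Fin (i + 1) → A) → E := fun τ =>
    G (trajRestrict (i : ℕ).le_succ τ) (τ.2 (Fin.last i))
  -- the summand only sees the first `i + 1` steps of `τ`
  change ∑ τ, trajProb ρ P π θ τ • g (trajRestrict (Nat.succ_le_of_lt i.isLt) τ) = 0
  rw [sum_trajProb_smul_trajRestrict hPsum hsum, sum_trajProb_succ_smul hPsum G]
  simp only [G, smul_comm _ (b _), ← smul_sum, hL, smul_zero, sum_const_zero]

end Trajectories

section TrajSet

variable {S : Type*} [DecidableEq S]

theorem trajSet_zero {n : ℕ} (s : Fin (n + 1) → S) : trajSet s 0 = {(s 0, 0)} := by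
  simp [trajSet]

theorem trajSet_trajRestrict {A : Type*} {m n : ℕ} (h : m ≤ n) (τ : (Fin (n + 1) → S) × (Fin n → A))
    {j : ℕ} (hj : j ≤ m) : trajSet (trajRestrict h τ).1 j = trajSet τ.1 j := by
  refine image_congr fun k hk => ?_
  have hk : k < m + 1 := by simp at hk; omega
  simp only [trajRestrict, Function.comp_apply, Prod.mk.injEq, and_true]
  refine congrArg τ.1 (Fin.ext ?_)
  rw [Fin.val_castLE, Fin.val_cast_of_lt hk, Fin.val_cast_of_lt (by omega)]

theorem sum_Ico_trajSet_sub_add {n : ℕ} (R : Finset (S × ℕ) → ℝ) (s : Fin (n + 1) → S) {i : ℕ}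
    (hi : i ≤ n) :
    ∑ j ∈ Ico i n, (R (trajSet s (j + 1)) - R (trajSet s j)) + R {(s 0, 0)} =
      R (trajSet s n) + (R (trajSet s 0) - R (trajSet s i)) := by
  rw [sum_Ico_sub (fun j => R (trajSet s j)) hi, trajSet_zero]
  ring

end TrajSet

theorem stmt_6_general {S A : Type*} [Fintype S] [DecidableEq S] [Fintype A] {H d : ℕ}
    (ρ : S → ℝ)
    (P : S → S → A → ℝ)
    (hPsum : ∀ (s : S) (a : A), ∑ s' : S, P s' s a = 1)
    (π : EuclideanSpace ℝ (Fin d) → S → A → ℝ)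
    (hdiff : ∀ (s : S) (a : A), Differentiable ℝ (fun θ => π θ s a))
    (hpos : ∀ (θ : EuclideanSpace ℝ (Fin d)) (s : S) (a : A), 0 < π θ s a)
    (hsum : ∀ (θ : EuclideanSpace ℝ (Fin d)) (s : S), ∑ a : A, π θ s a = 1)
    (R : Finset (S × ℕ) → ℝ)
    (J : EuclideanSpace ℝ (Fin d) → ℝ)
    (hJ : ∀ θ, J θ = ∑ τ : (Fin (H + 1) → S) × (Fin H → A),
      trajProb ρ P π θ τ * R (trajSet τ.1 H))
    (θ : EuclideanSpace ℝ (Fin d)) :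
    gradient J θ
      = ∑ τ : (Fin (H + 1) → S) × (Fin H → A),
          trajProb ρ P π θ τ •
            ∑ i : Fin H,
              ((∑ j ∈ Finset.Ico i.val H, (R (trajSet τ.1 (j + 1)) - R (trajSet τ.1 j)))
                  + R {(τ.1 0, 0)}) •
                gradient (fun θ' => Real.log (π θ' (τ.1 i.castSucc) (τ.2 i))) θ := by
  have hdiffθ : ∀ s a, DifferentiableAt ℝ (fun θ => π θ s a) θ := fun s a => hdiff s a θ
  have hπ : ∀ s a, π θ s a ≠ 0 := fun s a => (hpos θ s a).ne'
  have hJgrad : HasGradientAt J (∑ τ : (Fin (H + 1) → S) × (Fin H → A), R (trajSet τ.1 H) •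
      (trajProb ρ P π θ τ • ∑ i, ∇ (fun θ' => Real.log (π θ' (τ.1 i.castSucc) (τ.2 i))) θ)) θ := by
    rw [funext hJ]
    exact HasGradientAt.fun_sum fun τ _ => (hasGradientAt_trajProb hdiffθ hπ τ).mul_const _
  have hbaseline : ∀ i : Fin H, ∑ τ : (Fin (H + 1) → S) × (Fin H → A), trajProb ρ P π θ τ •
      ((R (trajSet τ.1 0) - R (trajSet τ.1 i)) •
        ∇ (fun θ' => Real.log (π θ' (τ.1 i.castSucc) (τ.2 i))) θ) = 0 := fun i => by
    simpa only [trajSet_trajRestrict _ _ (Nat.zero_le _), trajSet_trajRestrict _ _ le_rfl] using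
      sum_trajProb_baseline_smul_eq_zero hPsum (hsum θ) _
        (fun s => sum_smul_gradient_log_eq_zero (hdiffθ s) (hπ s) (hsum · s)) i
        fun τ => R (trajSet τ.1 0) - R (trajSet τ.1 i)
  have hsplit : ∀ τ : (Fin (H + 1) → S) × (Fin H → A), trajProb ρ P π θ τ • ∑ i : Fin H,
      ((∑ j ∈ Ico i.val H, (R (trajSet τ.1 (j + 1)) - R (trajSet τ.1 j))) + R {(τ.1 0, 0)}) •
        ∇ (fun θ' => Real.log (π θ' (τ.1 i.castSucc) (τ.2 i))) θ =
      R (trajSet τ.1 H) •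
          (trajProb ρ P π θ τ • ∑ i, ∇ (fun θ' => Real.log (π θ' (τ.1 i.castSucc) (τ.2 i))) θ) +
        ∑ i : Fin H, trajProb ρ P π θ τ • ((R (trajSet τ.1 0) - R (trajSet τ.1 i)) •
          ∇ (fun θ' => Real.log (π θ' (τ.1 i.castSucc) (τ.2 i))) θ) := fun τ => by
    simp only [sum_Ico_trajSet_sub_add R τ.1 Fin.is_le', add_smul, sum_add_distrib, smul_add,
      smul_sum, smul_comm (R _)]
  rw [hJgrad.gradient, sum_congr rfl fun τ _ => hsplit τ, sum_add_distrib, sum_comm,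
    sum_eq_zero fun i _ => hbaseline i, add_zero]

/-- **Policy-gradient theorem for submodular MDPs (Theorem 3 of the paper).**
With `J(θ) = ∑_τ f(θ,τ)·R(τ_{0:H})`, we have
`∇J(θ) = ∑_τ f(θ,τ) • ∑ᵢ (∑_{j=i}^{H-1} (R(τ_{0:j+1}) − R(τ_{0:j})) + R({(s₀,0)}))
          • ∇_θ log π(θ,sᵢ,aᵢ)`. -/
theorem stmt_6 {S A : Type*} [Fintype S] [DecidableEq S] [Fintype A] {H d : ℕ}
    (hH : 0 < H) (hd : 0 < d)
    (ρ : S → ℝ) (hρ : ∀ s, 0 ≤ ρ s) (hρsum : ∑ s : S, ρ s = 1)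
    (P : S → S → A → ℝ) (hPnonneg : ∀ s' s a, 0 ≤ P s' s a)
    (hPsum : ∀ (s : S) (a : A), ∑ s' : S, P s' s a = 1)
    (π : EuclideanSpace ℝ (Fin d) → S → A → ℝ)
    (hdiff : ∀ (s : S) (a : A), Differentiable ℝ (fun θ => π θ s a))
    (hpos : ∀ (θ : EuclideanSpace ℝ (Fin d)) (s : S) (a : A), 0 < π θ s a)
    (hsum : ∀ (θ : EuclideanSpace ℝ (Fin d)) (s : S), ∑ a : A, π θ s a = 1)
    (R : Finset (S × ℕ) → ℝ)
    (J : EuclideanSpace ℝ (Fin d) → ℝ)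
    (hJ : ∀ θ, J θ = ∑ τ : (Fin (H + 1) → S) × (Fin H → A),
      trajProb ρ P π θ τ * R (trajSet τ.1 H))
    (θ : EuclideanSpace ℝ (Fin d)) :
    gradient J θ
      = ∑ τ : (Fin (H + 1) → S) × (Fin H → A),
          trajProb ρ P π θ τ •
            ∑ i : Fin H,
              ((∑ j ∈ Finset.Ico i.val H, (R (trajSet τ.1 (j + 1)) - R (trajSet τ.1 j)))
                  + R {(τ.1 0, 0)}) •
                gradient (fun θ' => Real.log (π θ' (τ.1 i.castSucc) (τ.2 i))) θ :=
  stmt_6_general ρ P hPsum π hdiff hpos hsum R J hJ θ
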